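/- arXiv:2108.05858 — 3 statements merged into one kernel-verified Lean document; each statement's English description precedes it below -/
import Mathlib

section
/- Let P and Q be probability measures on ℝ^d with finite second moments, with P absolutely continuous with respect to the Lebesgue measure, and let T̄ be the Brenier map from P to Q, i.e. the P-a.e. unique gradient of a convex function with Q = T̄_# P. Let Γ denote the set of couplings of P and Q. Then the optimal transport problem inf_{γ ∈ Γ} ∫ ‖x − y‖² dγ(x, y) admits a unique minimizer γ̄, and γ̄ is the law of (X, T̄(X)) for X ∼ P; that is, a coupling γ of P and Q is optimal if and only if γ-almost surely Y = T̄(X). -/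
open MeasureTheory Set
open scoped RealInnerProductSpace

noncomputable section

/-- `T` is the gradient of a convex function on all of `ℝ^d`. -/
def IsGradientOfConvex {d : ℕ} (T : EuclideanSpace ℝ (Fin d) → EuclideanSpace ℝ (Fin d)) : Prop :=
  ∃ f : EuclideanSpace ℝ (Fin d) → ℝ,
    ConvexOn ℝ Set.univ f ∧ ∀ x, HasGradientAt f (T x) x

/-- `γ` is a coupling of `P` and `Q`: a probability measure on the product with the
prescribed marginals. -/
def IsCoupling {d : ℕ} (γ : Measure (EuclideanSpace ℝ (Fin d) × EuclideanSpace ℝ (Fin d)))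
    (P Q : Measure (EuclideanSpace ℝ (Fin d))) : Prop :=
  IsProbabilityMeasure γ ∧ γ.map Prod.fst = P ∧ γ.map Prod.snd = Q

/-- The quadratic transport cost of a coupling. -/
def transportCost {d : ℕ}
    (γ : Measure (EuclideanSpace ℝ (Fin d) × EuclideanSpace ℝ (Fin d))) : ℝ :=
  ∫ p, ‖p.1 - p.2‖ ^ 2 ∂γ

/-! Write `T̄ = ∇f` with `f` convex and let `f*` be its convex conjugate. By Fenchel–Young,
`f x + f* y ≥ ⟪x, y⟫`, with equality iff `y = T̄ x`. Since `‖x - y‖² = ‖x‖² + ‖y‖² - 2⟪x, y⟫` and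
the marginals fix the integrals of the first two terms, a coupling is optimal iff it maximises
`∫ ⟪x, y⟫ dγ`. Integrating the Fenchel–Young gap against a coupling `γ` of `P` and `Q = T̄_# P`
gives `∫ ⟪x, T̄ x⟫ dP - ∫ ⟪x, y⟫ dγ ≥ 0`, because the gap vanishes on the graph of `T̄`; so
equality holds iff the gap vanishes `γ`-a.e., i.e. iff `y = T̄ x` holds `γ`-a.e. -/

theorem MeasureTheory.integrable_fst_add_snd {α β : Type*} [MeasurableSpace α] [MeasurableSpace β]
    {μ : Measure (α × β)} {g : α → ℝ} {h : β → ℝ} (hg : Integrable g (μ.map Prod.fst))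
    (hh : Integrable h (μ.map Prod.snd)) : Integrable (fun p => g p.1 + h p.2) μ :=
  (hg.comp_measurable measurable_fst).add (hh.comp_measurable measurable_snd)

theorem MeasureTheory.integral_fst_add_snd {α β : Type*} [MeasurableSpace α] [MeasurableSpace β]
    {μ : Measure (α × β)} {g : α → ℝ} {h : β → ℝ} (hg : Integrable g (μ.map Prod.fst))
    (hh : Integrable h (μ.map Prod.snd)) :
    ∫ p, g p.1 + h p.2 ∂μ = ∫ x, g x ∂(μ.map Prod.fst) + ∫ y, h y ∂(μ.map Prod.snd) := by
  have hg' : Integrable (fun p => g p.1) μ := hg.comp_measurable measurable_fst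
  have hh' : Integrable (fun p => h p.2) μ := hh.comp_measurable measurable_snd
  rw [integral_add hg' hh', integral_map measurable_fst.aemeasurable hg.1,
    integral_map measurable_snd.aemeasurable hh.1]

theorem MeasureTheory.Measure.eq_map_graph_iff {α β : Type*} [MeasurableSpace α]
    [MeasurableSpace β] [MeasurableEq β] {P : Measure α} {γ : Measure (α × β)} {T : α → β}
    (hTm : Measurable T) (hγ1 : γ.map Prod.fst = P) :
    γ = P.map (fun x => (x, T x)) ↔ ∀ᵐ p ∂γ, p.2 = T p.1 := by
  have hgraph : Measurable fun x => (x, T x) := measurable_id.prodMk hTm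
  constructor
  · rintro rfl
    exact (ae_map_iff hgraph.aemeasurable (measurableSet_eq_fun measurable_snd
      (hTm.comp measurable_fst))).2 (ae_of_all _ fun _ => rfl)
  · intro hae
    calc γ = γ.map (fun p => (p.1, T p.1)) := by
          rw [Measure.map_congr (hae.mono fun p hp => (Prod.ext rfl hp.symm : (p.1, T p.1) = id p)),
            Measure.map_id]
      _ = P.map (fun x => (x, T x)) := by
          rw [← hγ1, Measure.map_map hgraph measurable_fst]
          rfl

section

open InnerProductSpace

variable {E : Type*} [NormedAddCommGroup E] [InnerProductSpace ℝ E]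
  {f : E → ℝ} {T : E → E} {u : ℕ → E}

/-- The convex conjugate `f*`, with the supremum taken along a dense sequence `u` so that it is
measurable. Off `seqConjDomain f u` the real `⨆` takes the junk value `0`. -/
def seqConj (f : E → ℝ) (u : ℕ → E) (y : E) : ℝ := ⨆ n, ⟪u n, y⟫ - f (u n)

def seqConjDomain (f : E → ℝ) (u : ℕ → E) : Set E :=
  {y | BddAbove (range fun n => ⟪u n, y⟫ - f (u n))}

def fenchelGap (f : E → ℝ) (u : ℕ → E) (p : E × E) : ℝ := f p.1 + seqConj f u p.2 - ⟪p.1, p.2⟫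

theorem inner_sub_le_seqConj (hu : DenseRange u) (hfc : Continuous f) {y : E}
    (hy : y ∈ seqConjDomain f u) (x : E) : ⟪x, y⟫ - f x ≤ seqConj f u y := by
  have hclosed : IsClosed {z | ⟪z, y⟫ - f z ≤ seqConj f u y} :=
    isClosed_le ((continuous_id.inner continuous_const).sub hfc) continuous_const
  exact hu.induction_on x hclosed fun n => le_ciSup hy n

theorem fenchelGap_nonneg (hu : DenseRange u) (hfc : Continuous f) {p : E × E}
    (hp : p.2 ∈ seqConjDomain f u) : 0 ≤ fenchelGap f u p := by
  have := inner_sub_le_seqConj hu hfc hp p.1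
  unfold fenchelGap
  linarith

section Gradient

variable [CompleteSpace E]

theorem continuous_of_hasGradientAt (hT : ∀ x, HasGradientAt f (T x) x) : Continuous f :=
  continuous_iff_continuousAt.2 fun x => (hT x).continuousAt

theorem ConvexOn.add_inner_gradient_le (hf : ConvexOn ℝ univ f)
    (hT : ∀ x, HasGradientAt f (T x) x) (a b : E) : f a + ⟪T a, b - a⟫ ≤ f b := by
  let φ : ℝ → ℝ := f ∘ AffineMap.lineMap a b
  have hφ : ConvexOn ℝ univ φ := hf.comp_affineMap (AffineMap.lineMap a b)
  have hfa : HasFDerivAt f (toDual ℝ E (T a)) (AffineMap.lineMap a b (0 : ℝ)) := by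
    simpa using (hT a).hasFDerivAt
  have hφ' : HasDerivAt φ ⟪T a, b - a⟫ 0 := by
    simpa [toDual_apply_apply] using hfa.comp_hasDerivAt (0 : ℝ) AffineMap.hasDerivAt_lineMap
  have := hφ.le_slope_of_hasDerivAt (mem_univ 0) (mem_univ 1) one_pos hφ'
  simp only [slope_def_field, φ, Function.comp_apply, AffineMap.lineMap_apply_one,
    AffineMap.lineMap_apply_zero] at this
  linarith

theorem ConvexOn.inner_sub_le_inner_gradient_sub (hf : ConvexOn ℝ univ f)
    (hT : ∀ x, HasGradientAt f (T x) x) (x z : E) : ⟪z, T x⟫ - f z ≤ ⟪x, T x⟫ - f x := by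
  have := hf.add_inner_gradient_le hT x z
  rw [inner_sub_right, real_inner_comm z, real_inner_comm x] at this
  linarith

theorem gradient_mem_seqConjDomain (hf : ConvexOn ℝ univ f)
    (hT : ∀ x, HasGradientAt f (T x) x) (x : E) : T x ∈ seqConjDomain f u :=
  ⟨⟪x, T x⟫ - f x, by
    rintro _ ⟨n, rfl⟩
    exact hf.inner_sub_le_inner_gradient_sub hT x (u n)⟩

theorem seqConj_gradient (hf : ConvexOn ℝ univ f) (hT : ∀ x, HasGradientAt f (T x) x)
    (hu : DenseRange u) (x : E) : seqConj f u (T x) = ⟪x, T x⟫ - f x := by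
  have hfc := continuous_of_hasGradientAt hT
  exact le_antisymm (ciSup_le fun n => hf.inner_sub_le_inner_gradient_sub hT x (u n))
    (inner_sub_le_seqConj hu hfc (gradient_mem_seqConjDomain hf hT x) x)

theorem fenchelGap_gradient (hf : ConvexOn ℝ univ f) (hT : ∀ x, HasGradientAt f (T x) x)
    (hu : DenseRange u) (x : E) : fenchelGap f u (x, T x) = 0 := by
  simp only [fenchelGap, seqConj_gradient hf hT hu x]
  ring

theorem eq_gradient_of_fenchelGap_eq_zero (hT : ∀ x, HasGradientAt f (T x) x)
    (hu : DenseRange u) {p : E × E} (hp : p.2 ∈ seqConjDomain f u)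
    (hgap : fenchelGap f u p = 0) : p.2 = T p.1 := by
  have hfc := continuous_of_hasGradientAt hT
  have hmax : IsLocalMax (fun z => ⟪z, p.2⟫ - f z) p.1 := by
    refine Filter.Eventually.of_forall fun z => ?_
    have := inner_sub_le_seqConj hu hfc hp z
    simp only [fenchelGap] at hgap
    linarith
  have hderiv : HasFDerivAt (fun z => ⟪z, p.2⟫ - f z) (toDual ℝ E (p.2 - T p.1)) p.1 := by
    rw [map_sub]
    refine HasFDerivAt.sub ?_ (hT p.1).hasFDerivAt
    have hlin : (fun z => ⟪z, p.2⟫) = toDual ℝ E p.2 :=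
      funext fun z => by rw [toDual_apply_apply, real_inner_comm]
    exact hlin ▸ (toDual ℝ E p.2).hasFDerivAt
  have := hmax.hasFDerivAt_eq_zero hderiv
  rwa [LinearIsometryEquiv.map_eq_zero_iff, sub_eq_zero] at this

end Gradient

theorem MeasureTheory.Integrable.inner_of_sq_norm {α : Type*} [MeasurableSpace α] {μ : Measure α}
    {g h : α → E} (hg : AEStronglyMeasurable g μ) (hh : AEStronglyMeasurable h μ)
    (hg2 : Integrable (fun a => ‖g a‖ ^ 2) μ) (hh2 : Integrable (fun a => ‖h a‖ ^ 2) μ) :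
    Integrable (fun a => ⟪g a, h a⟫) μ := by
  refine (hg2.add hh2).mono (hg.inner hh) (ae_of_all _ fun a => ?_)
  calc ‖⟪g a, h a⟫‖ ≤ ‖g a‖ * ‖h a‖ := norm_inner_le_norm _ _
    _ ≤ ‖g a‖ ^ 2 + ‖h a‖ ^ 2 := by nlinarith [sq_nonneg (‖g a‖ - ‖h a‖)]
    _ ≤ ‖‖g a‖ ^ 2 + ‖h a‖ ^ 2‖ := le_abs_self _

section Measure

variable [MeasurableSpace E] [BorelSpace E]

theorem measurable_of_hasGradientAt [CompleteSpace E] (hT : ∀ x, HasGradientAt f (T x) x) :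
    Measurable T := by
  have hT_eq : T = fun x => (toDual ℝ E).symm (fderiv ℝ f x) :=
    funext fun x => by rw [(hT x).hasFDerivAt.fderiv, LinearIsometryEquiv.symm_apply_apply]
  rw [hT_eq]
  exact (toDual ℝ E).symm.continuous.measurable.comp (measurable_fderiv ℝ f)

variable [SecondCountableTopology E]

theorem measurable_seqConj : Measurable (seqConj f u) :=
  .iSup fun _ => (measurable_const.inner measurable_id).sub measurable_const

theorem measurableSet_seqConjDomain : MeasurableSet (seqConjDomain f u) :=
  measurableSet_bddAbove_range fun _ => (measurable_const.inner measurable_id).sub measurable_const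

theorem integrable_inner_of_map_sq_norm {γ : Measure (E × E)}
    (h1 : Integrable (fun x => ‖x‖ ^ 2) (γ.map Prod.fst))
    (h2 : Integrable (fun y => ‖y‖ ^ 2) (γ.map Prod.snd)) :
    Integrable (fun p => ⟪p.1, p.2⟫) γ :=
  .inner_of_sq_norm measurable_fst.aestronglyMeasurable measurable_snd.aestronglyMeasurable
    (h1.comp_measurable measurable_fst) (h2.comp_measurable measurable_snd)

theorem integrable_inner_of_map_eq_map {P : Measure E} {γ : Measure (E × E)} (hTm : Measurable T)
    (hP2 : Integrable (fun x => ‖x‖ ^ 2) P) (hT2 : Integrable (fun x => ‖T x‖ ^ 2) P)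
    (hγ1 : γ.map Prod.fst = P) (hγ2 : γ.map Prod.snd = P.map T) :
    Integrable (fun p => ⟪p.1, p.2⟫) γ :=
  integrable_inner_of_map_sq_norm (hγ1 ▸ hP2)
    (hγ2 ▸ (integrable_map_measure (by fun_prop) hTm.aemeasurable).2 hT2)

variable [CompleteSpace E] {P : Measure E} {γ : Measure (E × E)}

theorem ConvexOn.integrable_of_hasGradientAt [IsFiniteMeasure P] (hf : ConvexOn ℝ univ f)
    (hT : ∀ x, HasGradientAt f (T x) x) (hP2 : Integrable (fun x => ‖x‖ ^ 2) P)
    (hT2 : Integrable (fun x => ‖T x‖ ^ 2) P) : Integrable f P := by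
  have hfc := continuous_of_hasGradientAt hT
  have hTm := measurable_of_hasGradientAt hT
  refine integrable_of_le_of_le (g₁ := fun x => f 0 + ⟪T 0, x⟫) (g₂ := fun x => f 0 + ⟪x, T x⟫)
    hfc.aestronglyMeasurable (ae_of_all _ fun x => ?_) (ae_of_all _ fun x => ?_) ?_ ?_
  · simpa using hf.add_inner_gradient_le hT 0 x
  · simpa [add_comm] using hf.inner_sub_le_inner_gradient_sub hT x 0
  · exact (integrable_const _).add (.inner_of_sq_norm aestronglyMeasurable_const
      aestronglyMeasurable_id (integrable_const _) hP2)
  · exact (integrable_const _).add (.inner_of_sq_norm aestronglyMeasurable_id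
      hTm.aestronglyMeasurable hP2 hT2)

theorem integrable_seqConj_map [IsFiniteMeasure P] (hf : ConvexOn ℝ univ f)
    (hT : ∀ x, HasGradientAt f (T x) x) (hu : DenseRange u)
    (hP2 : Integrable (fun x => ‖x‖ ^ 2) P) (hT2 : Integrable (fun x => ‖T x‖ ^ 2) P) :
    Integrable (seqConj f u) (P.map T) := by
  have hTm := measurable_of_hasGradientAt hT
  rw [integrable_map_measure measurable_seqConj.aestronglyMeasurable hTm.aemeasurable]
  have hconj : seqConj f u ∘ T = fun x => ⟪x, T x⟫ - f x := funext (seqConj_gradient hf hT hu)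
  rw [hconj]
  exact (Integrable.inner_of_sq_norm aestronglyMeasurable_id hTm.aestronglyMeasurable hP2 hT2).sub
    (hf.integrable_of_hasGradientAt hT hP2 hT2)

theorem ae_snd_mem_seqConjDomain (hf : ConvexOn ℝ univ f) (hT : ∀ x, HasGradientAt f (T x) x)
    (hγ2 : γ.map Prod.snd = P.map T) : ∀ᵐ p ∂γ, p.2 ∈ seqConjDomain f u := by
  have hQ : ∀ᵐ y ∂(P.map T), y ∈ seqConjDomain f u :=
    (ae_map_iff (measurable_of_hasGradientAt hT).aemeasurable measurableSet_seqConjDomain).2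
      (ae_of_all _ (gradient_mem_seqConjDomain hf hT))
  rw [← hγ2] at hQ
  exact (ae_map_iff measurable_snd.aemeasurable measurableSet_seqConjDomain).1 hQ

theorem integrable_fenchelGap [IsFiniteMeasure P] (hf : ConvexOn ℝ univ f)
    (hT : ∀ x, HasGradientAt f (T x) x) (hu : DenseRange u)
    (hP2 : Integrable (fun x => ‖x‖ ^ 2) P) (hT2 : Integrable (fun x => ‖T x‖ ^ 2) P)
    (hγ1 : γ.map Prod.fst = P) (hγ2 : γ.map Prod.snd = P.map T) :
    Integrable (fenchelGap f u) γ :=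
  (integrable_fst_add_snd (hγ1 ▸ hf.integrable_of_hasGradientAt hT hP2 hT2)
    (hγ2 ▸ integrable_seqConj_map hf hT hu hP2 hT2)).sub
    (integrable_inner_of_map_eq_map (measurable_of_hasGradientAt hT) hP2 hT2 hγ1 hγ2)

theorem integral_fenchelGap [IsFiniteMeasure P] (hf : ConvexOn ℝ univ f)
    (hT : ∀ x, HasGradientAt f (T x) x) (hu : DenseRange u)
    (hP2 : Integrable (fun x => ‖x‖ ^ 2) P) (hT2 : Integrable (fun x => ‖T x‖ ^ 2) P)
    (hγ1 : γ.map Prod.fst = P) (hγ2 : γ.map Prod.snd = P.map T) :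
    ∫ p, fenchelGap f u p ∂γ = ∫ x, ⟪x, T x⟫ ∂P - ∫ p, ⟪p.1, p.2⟫ ∂γ := by
  have hTm := measurable_of_hasGradientAt hT
  have hfP := hf.integrable_of_hasGradientAt hT hP2 hT2
  have hconjQ := integrable_seqConj_map hf hT hu hP2 hT2
  have hinner := integrable_inner_of_map_eq_map hTm hP2 hT2 hγ1 hγ2
  have hinnerP : Integrable (fun x => ⟪x, T x⟫) P :=
    .inner_of_sq_norm aestronglyMeasurable_id hTm.aestronglyMeasurable hP2 hT2
  have hconj : ∫ y, seqConj f u y ∂(P.map T) = ∫ x, ⟪x, T x⟫ ∂P - ∫ x, f x ∂P := by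
    rw [integral_map hTm.aemeasurable measurable_seqConj.aestronglyMeasurable,
      ← integral_sub hinnerP hfP]
    exact integral_congr_ae (ae_of_all _ (seqConj_gradient hf hT hu))
  simp only [fenchelGap]
  rw [integral_sub (integrable_fst_add_snd (hγ1 ▸ hfP) (hγ2 ▸ hconjQ)) hinner,
    integral_fst_add_snd (hγ1 ▸ hfP) (hγ2 ▸ hconjQ), hγ1, hγ2, hconj]
  ring

theorem ae_fenchelGap_nonneg (hf : ConvexOn ℝ univ f) (hT : ∀ x, HasGradientAt f (T x) x)
    (hu : DenseRange u) (hγ2 : γ.map Prod.snd = P.map T) : 0 ≤ᵐ[γ] fenchelGap f u := by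
  have hfc := continuous_of_hasGradientAt hT
  filter_upwards [ae_snd_mem_seqConjDomain hf hT hγ2] with p hp
  exact fenchelGap_nonneg hu hfc hp

theorem integral_inner_le_integral_inner_gradient [IsFiniteMeasure P] (hf : ConvexOn ℝ univ f)
    (hT : ∀ x, HasGradientAt f (T x) x) (hP2 : Integrable (fun x => ‖x‖ ^ 2) P)
    (hT2 : Integrable (fun x => ‖T x‖ ^ 2) P) (hγ1 : γ.map Prod.fst = P)
    (hγ2 : γ.map Prod.snd = P.map T) : ∫ p, ⟪p.1, p.2⟫ ∂γ ≤ ∫ x, ⟪x, T x⟫ ∂P := by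
  have hu := TopologicalSpace.denseRange_denseSeq E
  have := integral_nonneg_of_ae (ae_fenchelGap_nonneg hf hT hu hγ2)
  rw [integral_fenchelGap hf hT hu hP2 hT2 hγ1 hγ2] at this
  linarith

theorem integral_inner_eq_integral_inner_gradient_iff [IsFiniteMeasure P]
    (hf : ConvexOn ℝ univ f) (hT : ∀ x, HasGradientAt f (T x) x)
    (hP2 : Integrable (fun x => ‖x‖ ^ 2) P) (hT2 : Integrable (fun x => ‖T x‖ ^ 2) P)
    (hγ1 : γ.map Prod.fst = P) (hγ2 : γ.map Prod.snd = P.map T) :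
    ∫ p, ⟪p.1, p.2⟫ ∂γ = ∫ x, ⟪x, T x⟫ ∂P ↔ ∀ᵐ p ∂γ, p.2 = T p.1 := by
  have hu := TopologicalSpace.denseRange_denseSeq E
  rw [eq_comm, ← sub_eq_zero, ← integral_fenchelGap hf hT hu hP2 hT2 hγ1 hγ2,
    integral_eq_zero_iff_of_nonneg_ae (ae_fenchelGap_nonneg hf hT hu hγ2)
      (integrable_fenchelGap hf hT hu hP2 hT2 hγ1 hγ2)]
  constructor
  · intro hgap
    filter_upwards [hgap, ae_snd_mem_seqConjDomain hf hT hγ2] with p hp hpD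
    exact eq_gradient_of_fenchelGap_eq_zero hT hu hpD hp
  · intro hgraph
    filter_upwards [hgraph] with p hp
    simpa [← hp] using fenchelGap_gradient hf hT hu p.1

end Measure

end

section Euclidean

variable {d : ℕ} {P Q : Measure (EuclideanSpace ℝ (Fin d))}
  {γ : Measure (EuclideanSpace ℝ (Fin d) × EuclideanSpace ℝ (Fin d))}
  {f : EuclideanSpace ℝ (Fin d) → ℝ} {T : EuclideanSpace ℝ (Fin d) → EuclideanSpace ℝ (Fin d)}

theorem transportCost_eq (hγ1 : γ.map Prod.fst = P) (hγ2 : γ.map Prod.snd = Q)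
    (hP2 : Integrable (fun x => ‖x‖ ^ 2) P) (hQ2 : Integrable (fun y => ‖y‖ ^ 2) Q) :
    transportCost γ = ∫ x, ‖x‖ ^ 2 ∂P + ∫ y, ‖y‖ ^ 2 ∂Q - 2 * ∫ p, ⟪p.1, p.2⟫ ∂γ := by
  have hP2' : Integrable (fun x => ‖x‖ ^ 2) (γ.map Prod.fst) := hγ1 ▸ hP2
  have hQ2' : Integrable (fun y => ‖y‖ ^ 2) (γ.map Prod.snd) := hγ2 ▸ hQ2
  have hinner := integrable_inner_of_map_sq_norm hP2' hQ2'
  calc transportCost γ = ∫ p, (‖p.1‖ ^ 2 + ‖p.2‖ ^ 2) - 2 * ⟪p.1, p.2⟫ ∂γ :=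
        integral_congr_ae (ae_of_all _ fun p => by simp only [norm_sub_sq_real]; ring)
    _ = _ := by
        rw [integral_sub (integrable_fst_add_snd hP2' hQ2') (hinner.const_mul 2),
          integral_fst_add_snd hP2' hQ2', integral_const_mul, hγ1, hγ2]

theorem isCoupling_map_graph [IsProbabilityMeasure P] (hTm : Measurable T) :
    IsCoupling (P.map fun x => (x, T x)) P (P.map T) := by
  have hgraph : Measurable fun x => (x, T x) := measurable_id.prodMk hTm
  refine ⟨Measure.isProbabilityMeasure_map hgraph.aemeasurable, ?_, ?_⟩
  · rw [Measure.map_map measurable_fst hgraph]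
    exact Measure.map_id
  · rw [Measure.map_map measurable_snd hgraph]
    rfl

theorem transportCost_sub_transportCost_map_graph [IsProbabilityMeasure P] (hTm : Measurable T)
    (hP2 : Integrable (fun x => ‖x‖ ^ 2) P) (hT2 : Integrable (fun x => ‖T x‖ ^ 2) P)
    (hγ : IsCoupling γ P (P.map T)) :
    transportCost γ - transportCost (P.map fun x => (x, T x)) =
      2 * (∫ x, ⟪x, T x⟫ ∂P - ∫ p, ⟪p.1, p.2⟫ ∂γ) := by
  have hπ := isCoupling_map_graph (P := P) hTm
  have hQ2 : Integrable (fun y => ‖y‖ ^ 2) (P.map T) :=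
    (integrable_map_measure (by fun_prop) hTm.aemeasurable).2 hT2
  rw [transportCost_eq hγ.2.1 hγ.2.2 hP2 hQ2, transportCost_eq hπ.2.1 hπ.2.2 hP2 hQ2,
    integral_map (by fun_prop : AEMeasurable (fun x => (x, T x)) P) (by fun_prop)]
  ring

theorem transportCost_map_graph_le [IsProbabilityMeasure P] (hf : ConvexOn ℝ univ f)
    (hT : ∀ x, HasGradientAt f (T x) x) (hP2 : Integrable (fun x => ‖x‖ ^ 2) P)
    (hT2 : Integrable (fun x => ‖T x‖ ^ 2) P) (hγ : IsCoupling γ P (P.map T)) :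
    transportCost (P.map fun x => (x, T x)) ≤ transportCost γ := by
  have := transportCost_sub_transportCost_map_graph (measurable_of_hasGradientAt hT) hP2 hT2 hγ
  have := integral_inner_le_integral_inner_gradient hf hT hP2 hT2 hγ.2.1 hγ.2.2
  linarith

theorem transportCost_eq_map_graph_iff [IsProbabilityMeasure P] (hf : ConvexOn ℝ univ f)
    (hT : ∀ x, HasGradientAt f (T x) x) (hP2 : Integrable (fun x => ‖x‖ ^ 2) P)
    (hT2 : Integrable (fun x => ‖T x‖ ^ 2) P) (hγ : IsCoupling γ P (P.map T)) :
    transportCost γ = transportCost (P.map fun x => (x, T x)) ↔ ∀ᵐ p ∂γ, p.2 = T p.1 := by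
  have := transportCost_sub_transportCost_map_graph (measurable_of_hasGradientAt hT) hP2 hT2 hγ
  rw [← integral_inner_eq_integral_inner_gradient_iff hf hT hP2 hT2 hγ.2.1 hγ.2.2]
  constructor <;> intro h <;> linarith

end Euclidean

theorem brenier_optimality_general
    (d : ℕ) (P Q : Measure (EuclideanSpace ℝ (Fin d)))
    [IsProbabilityMeasure P]
    (hP2 : Integrable (fun x => ‖x‖ ^ 2) P)
    (hQ2 : Integrable (fun x => ‖x‖ ^ 2) Q)
    (Tbar : EuclideanSpace ℝ (Fin d) → EuclideanSpace ℝ (Fin d))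
    (hTbar : IsGradientOfConvex Tbar) (hpush : Q = P.map Tbar) :
    IsCoupling (P.map (fun x => (x, Tbar x))) P Q ∧
    (∀ γ, IsCoupling γ P Q →
      ((∀ γ', IsCoupling γ' P Q → transportCost γ ≤ transportCost γ') ↔
        γ = P.map (fun x => (x, Tbar x)))) ∧
    (∀ γ, IsCoupling γ P Q →
      ((∀ γ', IsCoupling γ' P Q → transportCost γ ≤ transportCost γ') ↔
        ∀ᵐ p ∂γ, p.2 = Tbar p.1)) := by
  obtain ⟨f, hf, hT⟩ := hTbar
  subst hpush
  have hTm := measurable_of_hasGradientAt hT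
  have hT2 : Integrable (fun x => ‖Tbar x‖ ^ 2) P := hQ2.comp_measurable hTm
  have hπ := isCoupling_map_graph (P := P) hTm
  have hopt : ∀ γ, IsCoupling γ P (P.map Tbar) →
      ((∀ γ', IsCoupling γ' P (P.map Tbar) → transportCost γ ≤ transportCost γ') ↔
        ∀ᵐ p ∂γ, p.2 = Tbar p.1) := fun γ hγ =>
    ⟨fun hmin => (transportCost_eq_map_graph_iff hf hT hP2 hT2 hγ).1
        (le_antisymm (hmin _ hπ) (transportCost_map_graph_le hf hT hP2 hT2 hγ)),
      fun hae γ' hγ' => (transportCost_eq_map_graph_iff hf hT hP2 hT2 hγ).2 hae ▸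
        transportCost_map_graph_le hf hT hP2 hT2 hγ'⟩
  exact ⟨hπ, fun γ hγ => (hopt γ hγ).trans (Measure.eq_map_graph_iff hTm hγ.2.1).symm, hopt⟩

/-- **Brenier's theorem (optimality).**
If `P, Q` have finite second moments, `P ≪ Leb`, and `T̄` is the Brenier map from `P` to `Q`
(the gradient of a convex function pushing `P` to `Q`), then the optimal transport problem over
couplings of `P` and `Q` has `γ̄ = law (X, T̄ X)` as unique minimizer; equivalently, a coupling
is optimal if and only if `Y = T̄ X` holds almost surely under it. -/
theorem brenier_optimality
    (d : ℕ) (P Q : Measure (EuclideanSpace ℝ (Fin d)))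
    [IsProbabilityMeasure P] [IsProbabilityMeasure Q]
    (hP2 : Integrable (fun x => ‖x‖ ^ 2) P)
    (hQ2 : Integrable (fun x => ‖x‖ ^ 2) Q)
    (hac : P ≪ (volume : Measure (EuclideanSpace ℝ (Fin d))))
    (Tbar : EuclideanSpace ℝ (Fin d) → EuclideanSpace ℝ (Fin d))
    (hTbar : IsGradientOfConvex Tbar) (hpush : Q = P.map Tbar) :
    IsCoupling (P.map (fun x => (x, Tbar x))) P Q ∧
    (∀ γ, IsCoupling γ P Q →
      ((∀ γ', IsCoupling γ' P Q → transportCost γ ≤ transportCost γ') ↔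
        γ = P.map (fun x => (x, Tbar x)))) ∧
    (∀ γ, IsCoupling γ P Q →
      ((∀ γ', IsCoupling γ' P Q → transportCost γ ≤ transportCost γ') ↔
        ∀ᵐ p ∂γ, p.2 = Tbar p.1)) :=
  brenier_optimality_general d P Q hP2 hQ2 Tbar hTbar hpush
end
end

section
/- Let μ_0⋆ be a probability measure on ℝ^d, absolutely continuous with respect to the Lebesgue measure and supported on a convex set K_0⋆, and let μ_1† be a probability measure supported on a finite subset F_1† of ℝ^d. If T_1 and T_2 are two monotone maps from K_0⋆ to F_1† with (T_1)_# μ_0⋆ = (T_2)_# μ_0⋆ = μ_1†, then T_1 = T_2 μ_0⋆-almost everywhere. -/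
/-!
By the Saks–Yu theorem, a monotone map `f` with finitely many values on a convex set `K` has a
potential. Near a point `p` of `K`, only the values whose cells accumulate at `p` occur, and by
monotonicity `f q` maximises `⟪v, q - p⟫` among them; so `f` is locally the subgradient of a
piecewise-linear convex function, and its line integrals around small triangles vanish. Goursat
subdivision, with a Lebesgue number of the cover by these neighbourhoods, makes them vanish around
every triangle in `K`, and integrating `f` from a base point gives the potential.

The potential makes `f x` a maximiser of `⟪v, x⟫ + c v` over the values `v` of `f`, for suitable
weights `c`. For two such maps `T₁`, `T₂` with weights `c₁`, `c₂`, adding the two optimality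
inequalities gives `(c₁ - c₂) (T₂ x) ≤ (c₁ - c₂) (T₁ x)`. Both sides have the same law, so they are
equal almost everywhere; then the optimality of `T₁ x` is an equality, which puts `x` on the
hyperplane `⟪T₁ x - T₂ x, x⟫ = c₁ (T₂ x) - c₁ (T₁ x)` unless `T₁ x = T₂ x`. Finitely many
hyperplanes are Lebesgue-null.
-/

open MeasureTheory Set
open scoped RealInnerProductSpace

noncomputable section

/-- `T` is monotone on `K`: `⟪x − y, T x − T y⟫ ≥ 0` for all `x, y ∈ K`. -/
def MonotoneMapOn {d : ℕ} (T : EuclideanSpace ℝ (Fin d) → EuclideanSpace ℝ (Fin d))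
    (K : Set (EuclideanSpace ℝ (Fin d))) : Prop :=
  ∀ x ∈ K, ∀ y ∈ K, 0 ≤ ⟪x - y, T x - T y⟫

open Filter Topology ProbabilityTheory

theorem eq_of_abs_sub_le_mul_sub {D g : ℝ → ℝ}
    (hD : ∀ a ∈ Icc (0:ℝ) 1, ∀ b ∈ Icc (0:ℝ) 1, a ≤ b → |D b - D a| ≤ (b - a) * (g b - g a)) :
    D 1 = D 0 := by
  have hpartition : ∀ N : ℕ, 0 < N → |D 1 - D 0| ≤ (g 1 - g 0) / N := by
    intro N hN
    have hN' : (0:ℝ) < N := Nat.cast_pos.2 hN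
    set a : ℕ → ℝ := fun j => j / N
    have ha0 : a 0 = 0 := by simp [a]
    have haN : a N = 1 := div_self hN'.ne'
    have hmem : ∀ j ≤ N, a j ∈ Icc (0:ℝ) 1 := fun j hj =>
      ⟨by positivity, div_le_one_of_le₀ (by exact_mod_cast hj) hN'.le⟩
    have hstep : ∀ j, a (j + 1) - a j = 1 / N := fun j => by simp only [a]; push_cast; ring
    calc |D 1 - D 0| = |∑ j ∈ Finset.range N, (D (a (j + 1)) - D (a j))| := by
          rw [Finset.sum_range_sub (fun j => D (a j)), ha0, haN]
      _ ≤ ∑ j ∈ Finset.range N, |D (a (j + 1)) - D (a j)| := Finset.abs_sum_le_sum_abs _ _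
      _ ≤ ∑ j ∈ Finset.range N, 1 / N * (g (a (j + 1)) - g (a j)) := by
          refine Finset.sum_le_sum fun j hj => ?_
          have hj := Finset.mem_range.1 hj
          rw [← hstep j]
          exact hD _ (hmem j hj.le) _ (hmem (j + 1) hj) (by linarith [hstep j, one_div_pos.2 hN'])
      _ = (g 1 - g 0) / N := by
          rw [← Finset.mul_sum, Finset.sum_range_sub (fun j => g (a j)), ha0, haN,
            one_div_mul_eq_div]
  have hlim : Tendsto (fun N : ℕ => (g 1 - g 0) / N) atTop (𝓝 0) :=
    tendsto_const_div_atTop_nhds_zero_nat _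
  have hle : |D 1 - D 0| ≤ 0 :=
    ge_of_tendsto hlim (eventually_atTop.2 ⟨1, fun N hN => hpartition N hN⟩)
  exact sub_eq_zero.1 (abs_nonpos_iff.1 hle)

theorem integral_eq_sub_of_subgradient {g φ : ℝ → ℝ}
    (hsub : ∀ s ∈ Icc (0:ℝ) 1, ∀ t ∈ Icc (0:ℝ) 1, φ t + (s - t) * g t ≤ φ s) :
    ∫ t in (0:ℝ)..1, g t = φ 1 - φ 0 := by
  have hg : MonotoneOn g (Icc 0 1) := fun s hs t ht hst => by
    rcases hst.eq_or_lt with rfl | hlt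
    · exact le_rfl
    · nlinarith [hsub s hs t ht, hsub t ht s hs]
  have hint : ∀ a ∈ Icc (0:ℝ) 1, ∀ b ∈ Icc (0:ℝ) 1, a ≤ b → IntervalIntegrable g volume a b :=
    fun a ha b hb hab =>
      (hg.mono (by rw [uIcc_of_le hab]; exact Icc_subset_Icc ha.1 hb.2)).intervalIntegrable
  suffices h : (∫ t in (0:ℝ)..1, g t) - φ 1 = (∫ t in (0:ℝ)..0, g t) - φ 0 by
    rw [intervalIntegral.integral_same] at h; linarith
  refine eq_of_abs_sub_le_mul_sub (D := fun x => (∫ t in (0:ℝ)..x, g t) - φ x) (g := g) ?_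
  intro a ha b hb hab
  have hsplit : (∫ t in (0:ℝ)..b, g t) - ∫ t in (0:ℝ)..a, g t = ∫ t in a..b, g t :=
    intervalIntegral.integral_interval_sub_left (hint 0 ⟨le_rfl, zero_le_one⟩ b hb hb.1)
      (hint 0 ⟨le_rfl, zero_le_one⟩ a ha ha.1)
  have hlower : (b - a) * g a ≤ ∫ t in a..b, g t := by
    simpa [mul_comm] using intervalIntegral.integral_mono_on hab intervalIntegrable_const
      (hint a ha b hb hab) fun t ht => hg ha ⟨ha.1.trans ht.1, ht.2.trans hb.2⟩ ht.1
  have hupper : ∫ t in a..b, g t ≤ (b - a) * g b := by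
    simpa [mul_comm] using intervalIntegral.integral_mono_on hab (hint a ha b hb hab)
      intervalIntegrable_const fun t ht => hg ⟨ha.1.trans ht.1, ht.2.trans hb.2⟩ hb ht.2
  have h₁ := hsub b hb a ha
  have h₂ := hsub a ha b hb
  rw [abs_le]
  constructor <;> nlinarith

theorem ProbabilityTheory.IdentDistrib.ae_eq_of_ae_le {Ω : Type*} [MeasurableSpace Ω]
    {μ : Measure Ω} [IsFiniteMeasure μ] {X Y : Ω → ℝ} (h : IdentDistrib X Y μ μ)
    (hXY : X ≤ᵐ[μ] Y) : X =ᵐ[μ] Y := by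
  -- `arctan` makes both sides bounded, hence integrable, without changing the order
  have harctan := h.comp Real.continuous_arctan.measurable
  have hint : Integrable (Real.arctan ∘ X) μ :=
    .of_bound harctan.aestronglyMeasurable_fst (Real.pi / 2) (ae_of_all _ fun x =>
      abs_le.2 ⟨(Real.neg_pi_div_two_lt_arctan _).le, (Real.arctan_lt_pi_div_two _).le⟩)
  have heq := (integral_eq_iff_of_ae_le hint (harctan.integrable_iff.1 hint)
    (hXY.mono fun x hx => Real.arctan_strictMono.monotone hx)).1 harctan.integral_eq
  exact heq.mono fun x hx => Real.arctan_injective hx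

section

variable {E : Type*} [NormedAddCommGroup E] [InnerProductSpace ℝ E]

def lineIntegral (f : E → E) (x y : E) : ℝ :=
  ∫ t in (0:ℝ)..1, ⟪y - x, f (x + t • (y - x))⟫

theorem lineIntegral_swap (f : E → E) (x y : E) : lineIntegral f y x = -lineIntegral f x y := by
  have hpoint : ∀ t : ℝ, ⟪x - y, f (y + t • (x - y))⟫ = -⟪y - x, f (x + (1 - t) • (y - x))⟫ :=
    fun t => by
      rw [show y + t • (x - y) = x + (1 - t) • (y - x) by module, ← neg_sub, inner_neg_left]
  simp only [lineIntegral, hpoint, intervalIntegral.integral_neg,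
    intervalIntegral.integral_comp_sub_left (fun t => ⟪y - x, f (x + t • (y - x))⟫) 1, sub_zero,
    sub_self]

theorem monotoneOn_lineIntegral_integrand {f : E → E} {K : Set E} (hK : Convex ℝ K)
    (hf : ∀ x ∈ K, ∀ y ∈ K, 0 ≤ ⟪x - y, f x - f y⟫) {x y : E} (hx : x ∈ K) (hy : y ∈ K) :
    MonotoneOn (fun t : ℝ => ⟪y - x, f (x + t • (y - x))⟫) (Icc 0 1) := by
  intro s hs t ht hst
  have hmono := hf _ (hK.add_smul_sub_mem hx hy ht) _ (hK.add_smul_sub_mem hx hy hs)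
  rw [show x + t • (y - x) - (x + s • (y - x)) = (t - s) • (y - x) by module,
    real_inner_smul_left, inner_sub_right] at hmono
  rcases hst.eq_or_lt with rfl | hlt
  · exact le_rfl
  · dsimp only
    nlinarith

theorem intervalIntegrable_lineIntegral_integrand {f : E → E} {K : Set E} (hK : Convex ℝ K)
    (hf : ∀ x ∈ K, ∀ y ∈ K, 0 ≤ ⟪x - y, f x - f y⟫) {x y : E} (hx : x ∈ K) (hy : y ∈ K) :
    IntervalIntegrable (fun t : ℝ => ⟪y - x, f (x + t • (y - x))⟫) volume 0 1 :=
  MonotoneOn.intervalIntegrable <| by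
    rw [uIcc_of_le zero_le_one]; exact monotoneOn_lineIntegral_integrand hK hf hx hy

theorem lineIntegral_add_midpoint {f : E → E} {x y : E}
    (hint : IntervalIntegrable (fun t : ℝ => ⟪y - x, f (x + t • (y - x))⟫) volume 0 1) :
    lineIntegral f x (midpoint ℝ x y) + lineIntegral f (midpoint ℝ x y) y = lineIntegral f x y := by
  set G : ℝ → ℝ := fun t => ⟪y - x, f (x + t • (y - x))⟫
  have hfirst : lineIntegral f x (midpoint ℝ x y) = ∫ t in (0:ℝ)..2⁻¹, G t := by
    have hpoint : ∀ t : ℝ, ⟪midpoint ℝ x y - x, f (x + t • (midpoint ℝ x y - x))⟫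
        = 2⁻¹ * G (t * 2⁻¹) := fun t => by
      simp only [G, midpoint_sub_left, invOf_eq_inv, smul_smul, real_inner_smul_left, mul_comm t]
    simp only [lineIntegral, hpoint, intervalIntegral.integral_const_mul,
      intervalIntegral.integral_comp_mul_right G (inv_ne_zero two_ne_zero)]
    norm_num
    ring
  have hsecond : lineIntegral f (midpoint ℝ x y) y = ∫ t in (2⁻¹:ℝ)..1, G t := by
    have hpoint : ∀ t : ℝ, ⟪y - midpoint ℝ x y, f (midpoint ℝ x y + t • (y - midpoint ℝ x y))⟫
        = 2⁻¹ * G (2⁻¹ * t + 2⁻¹) := fun t => by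
      simp only [G, right_sub_midpoint, invOf_eq_inv, real_inner_smul_left]
      congr 3
      rw [midpoint_eq_smul_add, invOf_eq_inv]
      module
    simp only [lineIntegral, hpoint, intervalIntegral.integral_const_mul,
      intervalIntegral.integral_comp_mul_add G (inv_ne_zero two_ne_zero)]
    norm_num
    ring
  rw [hfirst, hsecond, intervalIntegral.integral_add_adjacent_intervals
    (hint.mono_set (uIcc_subset_uIcc (by norm_num) (by norm_num)))
    (hint.mono_set (uIcc_subset_uIcc (by norm_num) (by norm_num)))]
  rfl

theorem inner_le_lineIntegral {f : E → E} {K : Set E} (hK : Convex ℝ K)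
    (hf : ∀ x ∈ K, ∀ y ∈ K, 0 ≤ ⟪x - y, f x - f y⟫) {x y : E} (hx : x ∈ K) (hy : y ∈ K) :
    ⟪y - x, f x⟫ ≤ lineIntegral f x y := by
  have h := intervalIntegral.integral_mono_on zero_le_one intervalIntegrable_const
    (intervalIntegrable_lineIntegral_integrand hK hf hx hy) fun t ht =>
      monotoneOn_lineIntegral_integrand hK hf hx hy (left_mem_Icc.2 zero_le_one) ht ht.1
  simpa [lineIntegral] using h

theorem lineIntegral_eq_sub_of_subgradient {f : E → E} {S : Set E} {φ : E → ℝ} (hS : Convex ℝ S)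
    (hφ : ∀ q ∈ S, ∀ z ∈ S, φ q + ⟪z - q, f q⟫ ≤ φ z) {x y : E} (hx : x ∈ S) (hy : y ∈ S) :
    lineIntegral f x y = φ y - φ x := by
  have h := integral_eq_sub_of_subgradient (g := fun t => ⟪y - x, f (x + t • (y - x))⟫)
    (φ := fun t => φ (x + t • (y - x))) fun s hs t ht => by
      have h := hφ _ (hS.add_smul_sub_mem hx hy ht) _ (hS.add_smul_sub_mem hx hy hs)
      rwa [show x + s • (y - x) - (x + t • (y - x)) = (s - t) • (y - x) by module,
        real_inner_smul_left] at h
  simpa [lineIntegral] using h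

theorem exists_local_subgradient {f : E → E} {K F : Set E}
    (hf : ∀ x ∈ K, ∀ y ∈ K, 0 ≤ ⟪x - y, f x - f y⟫) (hF : F.Finite) (hmaps : MapsTo f K F)
    {p : E} (hp : p ∈ K) :
    ∃ r > 0, ∃ φ : E → ℝ, ∀ q ∈ Metric.ball p r ∩ K, ∀ z, φ q + ⟪z - q, f q⟫ ≤ φ z := by
  set cell : E → Set E := fun v => K ∩ f ⁻¹' {v}
  set V : Set E := {v ∈ F | p ∈ closure (cell v)}
  have hV : V.Finite := hF.subset (sep_subset _ _)
  obtain ⟨r, hr, hball⟩ : ∃ r > 0, Metric.ball p r ⊆ ⋂ v ∈ F \ V, (closure (cell v))ᶜ := by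
    refine Metric.isOpen_iff.1 ((hF.subset sdiff_subset).isOpen_biInter
      fun v _ => isClosed_closure.isOpen_compl) p (mem_iInter₂.2 fun v hv hpv => hv.2 ⟨hv.1, hpv⟩)
  have hmemV : ∀ q ∈ Metric.ball p r ∩ K, f q ∈ V := by
    rintro q ⟨hqp, hqK⟩
    by_contra hqV
    exact mem_iInter₂.1 (hball hqp) (f q) ⟨hmaps hqK, hqV⟩ (subset_closure ⟨hqK, rfl⟩)
  -- monotonicity passes to the closure of each cell, in particular to `p`
  have hmax : ∀ q ∈ K, ∀ v ∈ V, ⟪v, q - p⟫ ≤ ⟪f q, q - p⟫ := by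
    intro q hq v hv
    have hcl : closure (cell v) ⊆ {y | 0 ≤ ⟪q - y, f q - v⟫} :=
      closure_minimal (fun y ⟨hy, hfy⟩ => by simpa [show f y = v from hfy] using hf q hq y hy)
        (isClosed_le continuous_const
          ((continuous_const.sub continuous_id).inner continuous_const))
    have h : 0 ≤ ⟪q - p, f q - v⟫ := hcl hv.2
    rw [inner_sub_right, real_inner_comm, real_inner_comm v] at h
    linarith
  have hVne : hV.toFinset.Nonempty := ⟨f p, hV.mem_toFinset.2 ⟨hmaps hp, subset_closure ⟨hp, rfl⟩⟩⟩
  refine ⟨r, hr, fun z => hV.toFinset.sup' hVne fun v => ⟪v, z - p⟫, fun q hq z => ?_⟩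
  have hle : hV.toFinset.sup' hVne (fun v => ⟪v, q - p⟫) ≤ ⟪f q, q - p⟫ :=
    Finset.sup'_le _ _ fun v hv => hmax q hq.2 v (hV.mem_toFinset.1 hv)
  have hge : ⟪f q, z - p⟫ ≤ hV.toFinset.sup' hVne fun v => ⟪v, z - p⟫ :=
    Finset.le_sup' (fun v => ⟪v, z - p⟫) (hV.mem_toFinset.2 (hmemV q hq))
  have hsplit : ⟪f q, z - p⟫ = ⟪f q, q - p⟫ + ⟪z - q, f q⟫ := by
    rw [real_inner_comm (f q) (z - q), ← inner_add_right, sub_add_sub_cancel']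
  linarith

def circulation (f : E → E) (x y z : E) : ℝ :=
  lineIntegral f x y + lineIntegral f y z + lineIntegral f z x

theorem circulation_eq_sum_midpoints {f : E → E} {K : Set E} (hK : Convex ℝ K)
    (hf : ∀ x ∈ K, ∀ y ∈ K, 0 ≤ ⟪x - y, f x - f y⟫) {x y z : E}
    (hx : x ∈ K) (hy : y ∈ K) (hz : z ∈ K) :
    circulation f x y z =
      circulation f x (midpoint ℝ x y) (midpoint ℝ x z) +
      circulation f (midpoint ℝ x y) y (midpoint ℝ y z) +
      circulation f (midpoint ℝ x z) (midpoint ℝ y z) z +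
      circulation f (midpoint ℝ x y) (midpoint ℝ y z) (midpoint ℝ x z) := by
  have hxy := lineIntegral_add_midpoint (intervalIntegrable_lineIntegral_integrand hK hf hx hy)
  have hyz := lineIntegral_add_midpoint (intervalIntegrable_lineIntegral_integrand hK hf hy hz)
  have hzx := lineIntegral_add_midpoint (intervalIntegrable_lineIntegral_integrand hK hf hz hx)
  rw [midpoint_comm z x] at hzx
  simp only [circulation, ← hxy, ← hyz, ← hzx,
    lineIntegral_swap f (midpoint ℝ y z) (midpoint ℝ x y),
    lineIntegral_swap f (midpoint ℝ x z) (midpoint ℝ x y),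
    lineIntegral_swap f (midpoint ℝ y z) (midpoint ℝ x z)]
  ring

theorem dist_midpoint_midpoint_same_left (x y z : E) :
    dist (midpoint ℝ x y) (midpoint ℝ x z) = dist y z / 2 := by
  rw [dist_eq_norm_vsub E, dist_eq_norm_vsub E, midpoint_vsub_midpoint_same_left, norm_smul,
    invOf_eq_inv, norm_inv, Real.norm_two, inv_mul_eq_div]

theorem circulation_eq_zero_of_perimeter_lt_two_pow_mul {f : E → E} {S : Set E}
    (hS : Convex ℝ S) (hf : ∀ x ∈ S, ∀ y ∈ S, 0 ≤ ⟪x - y, f x - f y⟫) {δ : ℝ}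
    (hsmall : ∀ x ∈ S, ∀ y ∈ S, ∀ z ∈ S,
      dist x y + dist y z + dist z x < δ → circulation f x y z = 0) (n : ℕ) :
    ∀ x ∈ S, ∀ y ∈ S, ∀ z ∈ S,
      dist x y + dist y z + dist z x < 2 ^ n * δ → circulation f x y z = 0 := by
  induction n with
  | zero => simpa using hsmall
  | succ n ih =>
    intro x hx y hy z hz hlt
    have hxy := hS.midpoint_mem hx hy
    have hyz := hS.midpoint_mem hy hz
    have hxz := hS.midpoint_mem hx hz
    have hleft : ∀ a b : E, dist (midpoint ℝ a b) a = dist a b / 2 := fun a b => by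
      simpa [dist_comm] using dist_midpoint_midpoint_same_left a a b
    have hright : ∀ a b : E, dist (midpoint ℝ a b) b = dist a b / 2 := fun a b => by
      rw [midpoint_comm, hleft, dist_comm]
    have hcross : ∀ a b c : E, dist (midpoint ℝ a b) (midpoint ℝ b c) = dist a c / 2 :=
      fun a b c => by rw [midpoint_comm a b, dist_midpoint_midpoint_same_left]
    have hsame : ∀ a b c : E, dist (midpoint ℝ a c) (midpoint ℝ b c) = dist a b / 2 :=
      fun a b c => by rw [midpoint_comm a c, midpoint_comm b c, dist_midpoint_midpoint_same_left]
    rw [pow_succ] at hlt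
    rw [circulation_eq_sum_midpoints hS hf hx hy hz, ih x hx _ hxy _ hxz ?_, ih _ hxy y hy _ hyz ?_,
      ih _ hxz _ hyz z hz ?_, ih _ hxy _ hyz _ hxz ?_, add_zero, add_zero, add_zero]
    all_goals
      linarith [hleft x y, hleft x z, hleft y z, hright x y, hright y z, hright x z,
        dist_midpoint_midpoint_same_left x y z, dist_midpoint_midpoint_same_left x z y,
        hcross x y z, hsame x y z, hsame y x z, dist_comm x (midpoint ℝ x y),
        dist_comm y (midpoint ℝ y z), dist_comm z (midpoint ℝ x z),
        dist_comm (midpoint ℝ y z) (midpoint ℝ x y), dist_comm x y, dist_comm y z, dist_comm x z]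

theorem circulation_eq_zero {f : E → E} {K F : Set E} (hK : Convex ℝ K)
    (hf : ∀ x ∈ K, ∀ y ∈ K, 0 ≤ ⟪x - y, f x - f y⟫) (hF : F.Finite) (hmaps : MapsTo f K F)
    {x y z : E} (hx : x ∈ K) (hy : y ∈ K) (hz : z ∈ K) : circulation f x y z = 0 := by
  set S := convexHull ℝ {x, y, z}
  have hSK : S ⊆ K :=
    convexHull_min (insert_subset hx (insert_subset hy (singleton_subset_iff.2 hz))) hK
  choose! r hr φ hφ using fun p (hp : p ∈ K) => exists_local_subgradient hf hF hmaps hp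
  obtain ⟨δ, hδ, hleb⟩ := lebesgue_number_lemma_of_metric
    (c := fun p : S => Metric.ball (p : E) (r p)) ((toFinite _).isCompact_convexHull ℝ)
    (fun _ => Metric.isOpen_ball)
    fun q hq => mem_iUnion.2 ⟨⟨q, hq⟩, Metric.mem_ball_self (hr q (hSK hq))⟩
  have hsmall : ∀ a ∈ S, ∀ b ∈ S, ∀ c ∈ S, dist a b + dist b c + dist c a < δ →
      circulation f a b c = 0 := by
    intro a ha b hb c hc hlt
    obtain ⟨⟨p, hpS⟩, hball⟩ := hleb a ha
    have hmem : ∀ q ∈ S, dist q a < δ → q ∈ Metric.ball p (r p) ∩ K := fun q hq hqa =>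
      ⟨hball hqa, hSK hq⟩
    have hconv : Convex ℝ (Metric.ball p (r p) ∩ K) := (convex_ball _ _).inter hK
    have hsub := hφ p (hSK hpS)
    have ha' := hmem a ha (by simpa using hδ)
    have hb' := hmem b hb <| by
      linarith [dist_nonneg (x := b) (y := c), dist_nonneg (x := c) (y := a), dist_comm a b]
    have hc' := hmem c hc <| by
      linarith [dist_nonneg (x := a) (y := b), dist_nonneg (x := b) (y := c)]
    rw [circulation, lineIntegral_eq_sub_of_subgradient hconv (fun q hq z _ => hsub q hq z) ha' hb',
      lineIntegral_eq_sub_of_subgradient hconv (fun q hq z _ => hsub q hq z) hb' hc',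
      lineIntegral_eq_sub_of_subgradient hconv (fun q hq z _ => hsub q hq z) hc' ha']
    ring
  obtain ⟨n, hn⟩ := pow_unbounded_of_one_lt ((dist x y + dist y z + dist z x) / δ) one_lt_two
  exact circulation_eq_zero_of_perimeter_lt_two_pow_mul (convex_convexHull ℝ _)
    (fun a ha b hb => hf a (hSK ha) b (hSK hb)) hsmall n x (subset_convexHull ℝ _ (by simp))
    y (subset_convexHull ℝ _ (by simp)) z (subset_convexHull ℝ _ (by simp)) ((div_lt_iff₀ hδ).1 hn)

theorem exists_subgradient_potential {f : E → E} {K F : Set E} (hK : Convex ℝ K)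
    (hf : ∀ x ∈ K, ∀ y ∈ K, 0 ≤ ⟪x - y, f x - f y⟫) (hF : F.Finite) (hmaps : MapsTo f K F) :
    ∃ φ : E → ℝ, ∀ x ∈ K, ∀ y ∈ K, φ x + ⟪y - x, f x⟫ ≤ φ y := by
  rcases K.eq_empty_or_nonempty with rfl | ⟨x₀, hx₀⟩
  · exact ⟨0, by simp⟩
  refine ⟨lineIntegral f x₀, fun x hx y hy => ?_⟩
  have hcirc := circulation_eq_zero hK hf hF hmaps hx₀ hx hy
  rw [circulation, lineIntegral_swap f x₀ y] at hcirc
  linarith [inner_le_lineIntegral hK hf hx hy]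

theorem exists_laguerre_weights {f : E → E} {K F : Set E} (hK : Convex ℝ K)
    (hf : ∀ x ∈ K, ∀ y ∈ K, 0 ≤ ⟪x - y, f x - f y⟫) (hF : F.Finite) (hmaps : MapsTo f K F) :
    ∃ c : E → ℝ, ∀ x ∈ K, ∀ y ∈ K, ⟪f y, x⟫ + c (f y) ≤ ⟪f x, x⟫ + c (f x) := by
  obtain ⟨φ, hφ⟩ := exists_subgradient_potential hK hf hF hmaps
  refine ⟨fun v => φ (Function.invFunOn f K v) - ⟪v, Function.invFunOn f K v⟫, fun x hx y hy => ?_⟩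
  set x' := Function.invFunOn f K (f x)
  set y' := Function.invFunOn f K (f y)
  have hfy' : f y' = f y := Function.invFunOn_eq ⟨y, hy, rfl⟩
  have h₁ : φ y' + ⟪x - y', f y⟫ ≤ φ x := hfy' ▸ hφ y' (Function.invFunOn_mem ⟨y, hy, rfl⟩) x hx
  have h₂ : φ x + ⟪x' - x, f x⟫ ≤ φ x' := hφ x hx x' (Function.invFunOn_mem ⟨x, hx, rfl⟩)
  show ⟪f y, x⟫ + (φ y' - ⟪f y, y'⟫) ≤ ⟪f x, x⟫ + (φ x' - ⟪f x, x'⟫)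
  rw [inner_sub_left] at h₁ h₂
  linarith [real_inner_comm (f y) x, real_inner_comm (f y) y', real_inner_comm (f x) x,
    real_inner_comm (f x) x']

theorem ae_inner_ne [FiniteDimensional ℝ E] [MeasurableSpace E] [BorelSpace E] (μ : Measure E)
    [μ.IsAddHaarMeasure] {v : E} (hv : v ≠ 0) (a : ℝ) : ∀ᵐ x ∂μ, ⟪v, x⟫ ≠ a := by
  have hsurj : Function.Surjective (innerₛₗ ℝ v) := fun t =>
    ⟨(t / ‖v‖ ^ 2) • v, by simp [hv]⟩
  exact (ae_comp_linearMap_mem_iff (innerₛₗ ℝ v) μ volume hsurj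
    (measurableSet_singleton a).compl).2 (by simp [ae_iff, measure_singleton])

theorem ProbabilityTheory.IdentDistrib.ae_eq_of_laguerre [FiniteDimensional ℝ E]
    [MeasurableSpace E] [BorelSpace E] {μ ν : Measure E} [IsFiniteMeasure μ] [ν.IsAddHaarMeasure]
    (hac : μ ≪ ν) {T₁ T₂ : E → E} (hT : IdentDistrib T₁ T₂ μ μ) {V : Set E} (hV : V.Finite)
    (hT₁V : ∀ᵐ x ∂μ, T₁ x ∈ V) (hT₂V : ∀ᵐ x ∂μ, T₂ x ∈ V) {c₁ c₂ : E → ℝ}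
    (hc₁ : ∀ᵐ x ∂μ, ⟪T₂ x, x⟫ + c₁ (T₂ x) ≤ ⟪T₁ x, x⟫ + c₁ (T₁ x))
    (hc₂ : ∀ᵐ x ∂μ, ⟪T₁ x, x⟫ + c₂ (T₁ x) ≤ ⟪T₂ x, x⟫ + c₂ (T₂ x)) :
    T₁ =ᵐ[μ] T₂ := by
  set h := V.indicator (c₁ - c₂)
  have hh : Measurable h := measurable_zero.measurable_of_countable_ne
    (hV.countable.mono fun x hx => by_contra fun hxV => hx (indicator_of_notMem hxV _).symm)
  have hle : h ∘ T₂ ≤ᵐ[μ] h ∘ T₁ := by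
    filter_upwards [hT₁V, hT₂V, hc₁, hc₂] with x h₁ h₂ hx₁ hx₂
    simp only [h, Function.comp_apply, indicator_of_mem h₁, indicator_of_mem h₂, Pi.sub_apply]
    linarith
  have heq : h ∘ T₂ =ᵐ[μ] h ∘ T₁ := (hT.symm.comp hh).ae_eq_of_ae_le hle
  have hplanes : ∀ᵐ x ∂μ, ∀ u ∈ V, ∀ w ∈ V, u ≠ w → ⟪u - w, x⟫ ≠ c₁ w - c₁ u := by
    refine (eventually_all_finite hV).2 fun u _ => (eventually_all_finite hV).2 fun w _ => ?_
    by_cases huw : u = w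
    · exact ae_of_all _ fun _ h => absurd huw h
    · exact Eventually.mono (hac.ae_le (ae_inner_ne ν (sub_ne_zero.2 huw) _)) fun _ hx _ => hx
  filter_upwards [hT₁V, hT₂V, hc₁, hc₂, heq, hplanes] with x h₁ h₂ hx₁ hx₂ hx hpx
  by_contra hne
  simp only [h, Function.comp_apply, indicator_of_mem h₁, indicator_of_mem h₂, Pi.sub_apply] at hx
  refine hpx (T₁ x) h₁ (T₂ x) h₂ hne ?_
  rw [inner_sub_left]
  linarith

end

theorem monotone_pushforward_ae_unique_general
    (d : ℕ) (μ₀star μ₁dag : Measure (EuclideanSpace ℝ (Fin d)))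
    [IsProbabilityMeasure μ₀star] [IsProbabilityMeasure μ₁dag]
    (hac : μ₀star ≪ (volume : Measure (EuclideanSpace ℝ (Fin d))))
    (K₀star F₁dag : Set (EuclideanSpace ℝ (Fin d)))
    (hK : Convex ℝ K₀star) (hsuppK : μ₀star K₀starᶜ = 0)
    (hF : F₁dag.Finite)
    (T₁ T₂ : EuclideanSpace ℝ (Fin d) → EuclideanSpace ℝ (Fin d))
    (hT₁mono : MonotoneMapOn T₁ K₀star) (hT₂mono : MonotoneMapOn T₂ K₀star)
    (hT₁maps : Set.MapsTo T₁ K₀star F₁dag) (hT₂maps : Set.MapsTo T₂ K₀star F₁dag)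
    (hT₁push : μ₀star.map T₁ = μ₁dag) (hT₂push : μ₀star.map T₂ = μ₁dag) :
    T₁ =ᵐ[μ₀star] T₂ := by
  obtain ⟨c₁, hc₁⟩ := exists_laguerre_weights hK hT₁mono hF hT₁maps
  obtain ⟨c₂, hc₂⟩ := exists_laguerre_weights hK hT₂mono hF hT₂maps
  have hT : IdentDistrib T₁ T₂ μ₀star μ₀star :=
    ⟨.of_map_ne_zero (hT₁push ▸ IsProbabilityMeasure.ne_zero _),
      .of_map_ne_zero (hT₂push ▸ IsProbabilityMeasure.ne_zero _), hT₁push.trans hT₂push.symm⟩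
  have hKae : ∀ᵐ x ∂μ₀star, x ∈ K₀star := ae_iff.2 hsuppK
  have h₂₁ : ∀ᵐ x ∂μ₀star, T₂ x ∈ T₁ '' K₀star :=
    hT.ae_mem_snd (hF.subset hT₁maps.image_subset).measurableSet
      (hKae.mono fun x hx => ⟨x, hx, rfl⟩)
  have h₁₂ : ∀ᵐ x ∂μ₀star, T₁ x ∈ T₂ '' K₀star :=
    hT.symm.ae_mem_snd (hF.subset hT₂maps.image_subset).measurableSet
      (hKae.mono fun x hx => ⟨x, hx, rfl⟩)
  refine hT.ae_eq_of_laguerre hac hF (hKae.mono fun x hx => hT₁maps hx)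
    (hKae.mono fun x hx => hT₂maps hx) (c₁ := c₁) (c₂ := c₂) ?_ ?_
  · filter_upwards [hKae, h₂₁] with x hx ⟨y, hy, hyx⟩
    exact hyx ▸ hc₁ x hx y hy
  · filter_upwards [hKae, h₁₂] with x hx ⟨y, hy, hyx⟩
    exact hyx ▸ hc₂ x hx y hy

/-- **Uniqueness (Theorem 3).** If `μ₀⋆` is absolutely continuous with convex support `K₀⋆`
and `μ₁†` is supported on a finite set `F₁†`, then any two monotone maps from `K₀⋆` to `F₁†`
pushing `μ₀⋆` forward to `μ₁†` agree `μ₀⋆`-almost everywhere. -/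
theorem monotone_pushforward_ae_unique
    (d : ℕ) (μ₀star μ₁dag : Measure (EuclideanSpace ℝ (Fin d)))
    [IsProbabilityMeasure μ₀star] [IsProbabilityMeasure μ₁dag]
    (hac : μ₀star ≪ (volume : Measure (EuclideanSpace ℝ (Fin d))))
    (K₀star F₁dag : Set (EuclideanSpace ℝ (Fin d)))
    (hK : Convex ℝ K₀star) (hsuppK : μ₀star K₀starᶜ = 0)
    (hF : F₁dag.Finite) (hsuppF : μ₁dag F₁dagᶜ = 0)
    (T₁ T₂ : EuclideanSpace ℝ (Fin d) → EuclideanSpace ℝ (Fin d))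
    (hT₁mono : MonotoneMapOn T₁ K₀star) (hT₂mono : MonotoneMapOn T₂ K₀star)
    (hT₁maps : Set.MapsTo T₁ K₀star F₁dag) (hT₂maps : Set.MapsTo T₂ K₀star F₁dag)
    (hT₁push : μ₀star.map T₁ = μ₁dag) (hT₂push : μ₀star.map T₂ = μ₁dag) :
    T₁ =ᵐ[μ₀star] T₂ :=
  monotone_pushforward_ae_unique_general d μ₀star μ₁dag hac K₀star F₁dag hK hsuppK hF T₁ T₂ hT₁mono
    hT₂mono hT₁maps hT₂maps hT₁push hT₂push
end
end

section
/- Let μ_0 and μ_1 be probability measures on ℝ with μ_0 atomless. If T : ℝ → ℝ is a monotone non-decreasing map with T_# μ_0 = μ_1, then T = F_1^{-1} ∘ F_0 holds μ_0-almost everywhere, where F_0 is the cumulative distribution function of μ_0 and F_1^{-1} is the quantile function of μ_1. In particular, the monotone non-decreasing map pushing μ_0 forward to μ_1 is μ_0-a.e. unique. -/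
open MeasureTheory ProbabilityTheory Set

noncomputable section

/-- The quantile function of a probability measure `μ` on `ℝ`:
`F_μ⁻¹ (q) = inf {x : ℝ | F_μ x ≥ q}`. -/
def quantileFn (μ : Measure ℝ) (q : ℝ) : ℝ :=
  sInf {x : ℝ | q ≤ cdf μ x}

/- Apart from its (at most two) extreme points, every point of `s` lies in some `Icc a b` with
rational endpoints `a, b ∈ s`; there are countably many such intervals. -/
theorem Set.OrdConnected.measure_eq_zero {μ : Measure ℝ} [NullSingletonClass μ] {s : Set ℝ}
    (hs : s.OrdConnected) (h : ∀ a ∈ s, ∀ b ∈ s, μ (Icc a b) = 0) : μ s = 0 := by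
  have hcover : s ⊆ (⋃ (a : ℚ) (b : ℚ) (_ : (a : ℝ) ∈ s ∧ (b : ℝ) ∈ s), Icc (a : ℝ) b) ∪
      ({x | IsLeast s x} ∪ {x | IsGreatest s x}) := by
    intro x hx
    by_cases hext : IsLeast s x ∨ IsGreatest s x
    · exact Or.inr hext
    obtain ⟨hleast, hgreatest⟩ := not_or.1 hext
    obtain ⟨y, hy, hyx⟩ : ∃ y ∈ s, y < x := by
      simpa [IsLeast, hx, lowerBounds] using hleast
    obtain ⟨z, hz, hxz⟩ : ∃ z ∈ s, x < z := by
      simpa [IsGreatest, hx, upperBounds] using hgreatest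
    obtain ⟨a, hya, hax⟩ := exists_rat_btwn hyx
    obtain ⟨b, hxb, hbz⟩ := exists_rat_btwn hxz
    refine Or.inl (mem_iUnion₂.2 ⟨a, b, mem_iUnion.2 ⟨⟨?_, ?_⟩, hax.le, hxb.le⟩⟩)
    · exact hs.out hy hx ⟨hya.le, hax.le⟩
    · exact hs.out hx hz ⟨hxb.le, hbz.le⟩
  refine measure_mono_null hcover (measure_union_null ?_ (measure_union_null ?_ ?_))
  · exact measure_iUnion_null fun a => measure_iUnion_null fun b =>
      measure_iUnion_null fun hab => h _ hab.1 _ hab.2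
  · exact Set.Subsingleton.measure_zero (fun x hx y hy => IsLeast.unique hx hy) μ
  · exact Set.Subsingleton.measure_zero (fun x hx y hy => IsGreatest.unique hx hy) μ

namespace ProbabilityTheory

variable (μ : Measure ℝ) [IsProbabilityMeasure μ]

theorem ae_cdf_ne [NullSingletonClass μ] (c : ℝ) :
    ∀ᵐ x ∂μ, cdf μ x ≠ c := by
  refine measure_eq_zero_iff_ae_notMem.1 <|
    (ordConnected_singleton.preimage_mono (monotone_cdf μ)).measure_eq_zero fun a ha b hb => ?_
  rw [← measure_congr Ioc_ae_eq_Icc, ← measure_cdf μ, StieltjesFunction.measure_Ioc,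
    show cdf μ b = cdf μ a from hb.trans ha.symm, sub_self, ENNReal.ofReal_zero]

variable {T : ℝ → ℝ}

theorem cdf_map (hT : Measurable T) (r : ℝ) : cdf (μ.map T) r = μ.real (T ⁻¹' Iic r) := by
  have := Measure.isProbabilityMeasure_map (μ := μ) hT.aemeasurable
  rw [cdf_eq_real, map_measureReal_apply hT measurableSet_Iic]

theorem cdf_le_cdf_map_of_monotone (hT : Monotone T) (x : ℝ) :
    cdf μ x ≤ cdf (μ.map T) (T x) := by
  rw [cdf_map μ hT.measurable, cdf_eq_real]
  exact measureReal_mono fun y (hy : y ≤ x) => hT hy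

theorem cdf_map_le_cdf_of_monotone_of_lt [NullSingletonClass μ] (hT : Monotone T) {r x : ℝ}
    (hr : r < T x) : cdf (μ.map T) r ≤ cdf μ x := by
  rw [cdf_map μ hT.measurable, cdf_eq_real, ← measureReal_congr Iio_ae_eq_Iic]
  exact measureReal_mono fun y (hy : T y ≤ r) => hT.reflect_lt (hy.trans_lt hr)

end ProbabilityTheory

/- `T x` is the least `z` with `F₀ x ≤ F₁ z`: it belongs to this set, and a smaller member `z`
would give a rational `r ∈ (z, T x)` with `F₁ r = F₀ x`, which happens only on a `μ₀`-null set. -/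
theorem monotone_pushforward_eq_quantile_comp_cdf_general
    (μ₀ μ₁ : Measure ℝ) [IsProbabilityMeasure μ₀]
    [NullSingletonClass μ₀] (T : ℝ → ℝ) (hT : Monotone T) (hpush : μ₀.map T = μ₁) :
    T =ᵐ[μ₀] fun x => quantileFn μ₁ (cdf μ₀ x) := by
  subst hpush
  have hlevel : ∀ᵐ x ∂μ₀, ∀ r : ℚ, cdf μ₀ x ≠ cdf (μ₀.map T) r :=
    ae_all_iff.2 fun r => ae_cdf_ne μ₀ _
  filter_upwards [hlevel] with x hx
  suffices IsLeast {z | cdf μ₀ x ≤ cdf (μ₀.map T) z} (T x) from this.csInf_eq.symm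
  refine ⟨cdf_le_cdf_map_of_monotone μ₀ hT x, fun z hz => ?_⟩
  by_contra! hzx
  obtain ⟨r, hzr, hrx⟩ := exists_rat_btwn hzx
  exact hx r <| le_antisymm (hz.trans (monotone_cdf _ hzr.le))
    (cdf_map_le_cdf_of_monotone_of_lt μ₀ hT hrx)

/-- **A.e. uniqueness of the monotone transport map on `ℝ`.** If `μ₀` is atomless and
`T : ℝ → ℝ` is monotone non-decreasing with `T_# μ₀ = μ₁`, then `T = F₁⁻¹ ∘ F₀`
holds `μ₀`-almost everywhere. -/
theorem monotone_pushforward_eq_quantile_comp_cdf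
    (μ₀ μ₁ : Measure ℝ) [IsProbabilityMeasure μ₀] [IsProbabilityMeasure μ₁]
    [NullSingletonClass μ₀] (T : ℝ → ℝ) (hT : Monotone T) (hpush : μ₀.map T = μ₁) :
    T =ᵐ[μ₀] fun x => quantileFn μ₁ (cdf μ₀ x) :=
  monotone_pushforward_eq_quantile_comp_cdf_general μ₀ μ₁ T hT hpush
end
end
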